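/- arXiv:2204.09372 — 2 statements merged into one kernel-verified Lean document; each statement's English description precedes it below -/
import Mathlib

section
/- Let {A_1, …, A_m} be a polyphase GCA set of size s_1×⋯×s_r and {B_1, …, B_n} a polyphase GCA set of size t_1×⋯×t_r. Define C_{ij} = A_i⊗B_j for 1 ≤ i ≤ m and 1 ≤ j ≤ n. Then the collection {C_{ij} : 1 ≤ i ≤ m, 1 ≤ j ≤ n} of m·n arrays is a polyphase GCA set of size s_1t_1×⋯×s_rt_r. -/
open scoped BigOperators

/-- An `r`-dimensional complex array, as a complex-valued function on ℤ^r. -/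
abbrev Arr (r : ℕ) := (Fin r → ℤ) → ℂ

/-- Index tuple `i` lies in the box `[0, s₁) × ⋯ × [0, s_r)`. -/
def InBox {r : ℕ} (s : Fin r → ℕ) (i : Fin r → ℤ) : Prop :=
  ∀ k, 0 ≤ i k ∧ i k < (s k : ℤ)

/-- The array vanishes outside the box of size `s`. -/
def SupportedOn {r : ℕ} (s : Fin r → ℕ) (A : Arr r) : Prop :=
  ∀ i, ¬ InBox s i → A i = 0

/-- Aperiodic autocorrelation of an array. -/
noncomputable def autocorr {r : ℕ} (A : Arr r) (δ : Fin r → ℤ) : ℂ :=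
  ∑ᶠ i : Fin r → ℤ, A i * (starRingEnd ℂ) (A (i - δ))

/-- Weight of an array: the sum of squared moduli of its entries. -/
noncomputable def weight {r : ℕ} (A : Arr r) : ℝ :=
  ∑ᶠ i : Fin r → ℤ, ‖A i‖ ^ 2

/-- Flipped-and-conjugated array `A*`, relative to size `s`. -/
noncomputable def flipConj {r : ℕ} (s : Fin r → ℕ) (A : Arr r) : Arr r :=
  fun i => (starRingEnd ℂ) (A fun k => (s k : ℤ) - 1 - i k)

/-- Kronecker product of arrays, where `t` is the size of `B`:
`(A ⊗ B)[i·t + j] = A[i]·B[j]`. -/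
noncomputable def kron {r : ℕ} (t : Fin r → ℕ) (A B : Arr r) : Arr r :=
  fun i => A (fun k => i k / (t k : ℤ)) * B (fun k => i k % (t k : ℤ))

/-- Concatenation of `X` (of extent `u` in dimension `i0`) and `Y` in dimension `i0`. -/
noncomputable def concat {r : ℕ} (i0 : Fin r) (u : ℕ) (X Y : Arr r) : Arr r :=
  fun v => if v i0 < (u : ℤ) then X v else Y (Function.update v i0 (v i0 - u))

/-- A polyphase array of size `s`: supported on the box and all in-box entries
are `N`-th roots of unity for some `N`. -/
def IsPolyphase {r : ℕ} (s : Fin r → ℕ) (A : Arr r) : Prop :=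
  SupportedOn s A ∧ ∃ N : ℕ, 0 < N ∧ ∀ i, InBox s i → A i ^ N = 1

/-- A binary array of size `s`: all in-box entries are ±1, zero outside. -/
def IsBinary {r : ℕ} (s : Fin r → ℕ) (A : Arr r) : Prop :=
  SupportedOn s A ∧ ∀ i, InBox s i → A i = 1 ∨ A i = -1

/-- Entries are zero or of modulus one, supported on the box of size `s`. -/
def IsUnimodZero {r : ℕ} (s : Fin r → ℕ) (A : Arr r) : Prop :=
  SupportedOn s A ∧ ∀ i, InBox s i → A i = 0 ∨ ‖A i‖ = 1

/-- Golay complementarity of a pair: `R_A + R_B = (w(A)+w(B))·Δ`. -/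
def ComplementaryPair {r : ℕ} (A B : Arr r) : Prop :=
  ∀ δ : Fin r → ℤ, autocorr A δ + autocorr B δ =
    if δ = 0 then ((weight A + weight B : ℝ) : ℂ) else 0

/-- Golay complementarity of a quad: `R_A + R_B + R_C + R_D = (Σ w)·Δ`. -/
def ComplementaryQuad {r : ℕ} (A B C D : Arr r) : Prop :=
  ∀ δ : Fin r → ℤ, autocorr A δ + autocorr B δ + autocorr C δ + autocorr D δ =
    if δ = 0 then ((weight A + weight B + weight C + weight D : ℝ) : ℂ) else 0

/-!
Write an index of `A ⊗ B` as `t * p + j` with `j` in the box of `B`, and a shift as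
`δ = t * u + v` with `0 ≤ v < t`. In each coordinate, `j - v` either stays in `[0, t)` or
needs a carry of `t` into `p`; hence `R_{A ⊗ B}(δ)` is the sum over carry vectors
`e ∈ {0,1}^r` of `R_A(u + e) · R_B(v - t e)`. Summed over the two complementary sets, each
such term vanishes unless `u + e = 0` and `v - t e = 0`, which forces
`δ = t (u + e) + (v - t e) = 0`.
-/

open Finset

variable {r : ℕ}

noncomputable def boxFinset (s : Fin r → ℕ) : Finset (Fin r → ℤ) :=
  Fintype.piFinset fun k => Ico 0 (s k : ℤ)

@[simp]
lemma mem_boxFinset {s : Fin r → ℕ} {i : Fin r → ℤ} : i ∈ boxFinset s ↔ InBox s i := by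
  simp [boxFinset, InBox]

lemma SupportedOn.inBox {s : Fin r → ℕ} {A : Arr r} (hA : SupportedOn s A) {i : Fin r → ℤ}
    (h : A i ≠ 0) : InBox s i :=
  not_not.1 (mt (hA i) h)

lemma SupportedOn.finsum_eq_sum {M : Type*} [AddCommMonoid M] {s : Fin r → ℕ} {A : Arr r}
    (hA : SupportedOn s A) {f : (Fin r → ℤ) → M} (hf : ∀ i, A i = 0 → f i = 0) :
    ∑ᶠ i, f i = ∑ i ∈ boxFinset s, f i :=
  finsum_eq_sum_of_support_subset f fun i hi =>
    mem_boxFinset.2 (hA.inBox fun h => hi (hf i h))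

lemma SupportedOn.autocorr_eq_sum {s : Fin r → ℕ} {A : Arr r} (hA : SupportedOn s A)
    (δ : Fin r → ℤ) :
    autocorr A δ = ∑ i ∈ boxFinset s, A i * starRingEnd ℂ (A (i - δ)) :=
  hA.finsum_eq_sum fun i h => by simp [h]

lemma SupportedOn.autocorr_zero {s : Fin r → ℕ} {A : Arr r} (hA : SupportedOn s A) :
    autocorr A 0 = weight A := by
  rw [hA.autocorr_eq_sum, weight, hA.finsum_eq_sum fun i h => by simp [h]]
  push_cast
  simp only [sub_zero, Complex.mul_conj']

lemma SupportedOn.eq_zero_of_size_eq_zero {s : Fin r → ℕ} {A : Arr r} (hA : SupportedOn s A)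
    {k : Fin r} (hk : s k = 0) : A = 0 :=
  funext fun i => hA i fun hi => by have := hi k; omega

lemma Int.mul_add_ediv_emod {t q b : ℤ} (hb : 0 ≤ b) (hbt : b < t) :
    (t * q + b) / t = q ∧ (t * q + b) % t = b :=
  (Int.ediv_emod_unique (by omega)).2 ⟨by ring, hb, hbt⟩

lemma InBox.pos {t : Fin r → ℕ} {j : Fin r → ℤ} (hj : InBox t j) (k : Fin r) : 0 < t k := by
  have := hj k; omega

lemma inBox_mul_iff {s t : Fin r → ℕ} (ht : ∀ k, 0 < t k) {x : Fin r → ℤ} :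
    InBox (fun k => s k * t k) x ↔ InBox s (fun k => x k / t k) := by
  refine forall_congr' fun k => ?_
  have htk : (0 : ℤ) < t k := by exact_mod_cast ht k
  rw [Int.ediv_nonneg_iff_of_pos htk, Int.ediv_lt_iff_lt_mul htk]
  push_cast
  rfl

lemma inBox_emod {t : Fin r → ℕ} (ht : ∀ k, 0 < t k) (x : Fin r → ℤ) :
    InBox t (fun k => x k % t k) := fun k =>
  have htk : (0 : ℤ) < t k := by exact_mod_cast ht k
  ⟨Int.emod_nonneg _ htk.ne', Int.emod_lt_of_pos _ htk⟩

lemma kron_apply_mul_add {t : Fin r → ℕ} (A B : Arr r) (p : Fin r → ℤ) {j : Fin r → ℤ}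
    (hj : InBox t j) : kron t A B (fun k => t k * p k + j k) = A p * B j := by
  have h k := Int.mul_add_ediv_emod (q := p k) (hj k).1 (hj k).2
  simp only [kron, funext fun k => (h k).1, funext fun k => (h k).2]

lemma SupportedOn.kron {s t : Fin r → ℕ} {A B : Arr r} (hA : SupportedOn s A)
    (hB : SupportedOn t B) : SupportedOn (fun k => s k * t k) (kron t A B) := by
  intro x hx
  by_contra h
  have ht := (hB.inBox (right_ne_zero_of_mul h)).pos
  exact hx ((inBox_mul_iff ht).2 (hA.inBox (left_ne_zero_of_mul h)))

lemma IsPolyphase.kron {s t : Fin r → ℕ} {A B : Arr r} (hA : IsPolyphase s A)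
    (hB : IsPolyphase t B) : IsPolyphase (fun k => s k * t k) (kron t A B) := by
  obtain ⟨hAs, M, hM, hAM⟩ := hA
  obtain ⟨hBs, N, hN, hBN⟩ := hB
  refine ⟨hAs.kron hBs, M * N, Nat.mul_pos hM hN, fun x hx => ?_⟩
  have ht k : 0 < t k := Nat.pos_of_mul_pos_left (hx.pos k)
  rw [_root_.kron, mul_pow, pow_mul, hAM _ ((inBox_mul_iff ht).1 hx), one_pow, one_mul,
    mul_comm, pow_mul, hBN _ (inBox_emod ht x), one_pow]

lemma sum_boxFinset_mul {M : Type*} [AddCommMonoid M] {s t : Fin r → ℕ} (ht : ∀ k, 0 < t k)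
    (f : (Fin r → ℤ) → M) :
    ∑ x ∈ boxFinset (fun k => s k * t k), f x =
      ∑ p ∈ boxFinset s, ∑ j ∈ boxFinset t, f (fun k => t k * p k + j k) := by
  rw [← sum_product']
  refine sum_nbij' (fun x => (fun k => x k / t k, fun k => x k % t k))
    (fun pj k => t k * pj.1 k + pj.2 k) (fun x hx => ?_) (fun pj hpj => ?_)
    (fun x _ => funext fun k => Int.mul_ediv_add_emod _ _) (fun pj hpj => ?_)
    (fun x _ => by simp only [Int.mul_ediv_add_emod])
  · simp only [mem_product, mem_boxFinset] at hx ⊢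
    exact ⟨(inBox_mul_iff ht).1 hx, inBox_emod ht x⟩
  · simp only [mem_product, mem_boxFinset] at hpj ⊢
    have h k := Int.mul_add_ediv_emod (q := pj.1 k) (hpj.2 k).1 (hpj.2 k).2
    rw [inBox_mul_iff ht]
    simpa only [h] using hpj.1
  · simp only [mem_product, mem_boxFinset] at hpj
    have h k := Int.mul_add_ediv_emod (q := pj.1 k) (hpj.2 k).1 (hpj.2 k).2
    simp only [h]

lemma Int.sub_sub_mul_mem_Ico_iff {t v j e : ℤ} (hj : 0 ≤ j ∧ j < t) (hv : 0 ≤ v ∧ v < t)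
    (he : 0 ≤ e ∧ e < 2) :
    j - (v - t * e) ∈ Set.Ico 0 t ↔ e = if j < v then 1 else 0 := by
  rw [Set.mem_Ico]
  obtain rfl | rfl : e = 0 ∨ e = 1 := by omega
  all_goals split_ifs <;> omega

lemma kron_mul_conj_kron_sub {t : Fin r → ℕ} (A : Arr r) {B : Arr r} (hB : SupportedOn t B)
    (p : Fin r → ℤ) {j : Fin r → ℤ} (hj : InBox t j) (δ : Fin r → ℤ) :
    kron t A B (fun k => t k * p k + j k) *
        starRingEnd ℂ (kron t A B ((fun k => t k * p k + j k) - δ)) =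
      ∑ e ∈ boxFinset (fun _ => 2),
        A p * starRingEnd ℂ (A (p - fun k => δ k / t k + e k)) *
          (B j * starRingEnd ℂ (B (j - fun k => δ k % t k - t k * e k))) := by
  set e₀ : Fin r → ℤ := fun k => if j k < δ k % t k then 1 else 0
  have he₀ : e₀ ∈ boxFinset (fun _ => 2) := mem_boxFinset.2 fun k => by
    simp only [e₀]; split_ifs <;> omega
  have hcarry : ∀ e ∈ boxFinset (fun _ => 2),
      InBox t (j - fun k => δ k % t k - t k * e k) ↔ e = e₀ := fun e he => by
    rw [mem_boxFinset] at he
    simp only [InBox, funext_iff, Pi.sub_apply]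
    exact forall_congr' fun k =>
      Int.sub_sub_mul_mem_Ico_iff (hj k) (inBox_emod hj.pos δ k) (he k)
  -- only the carry vector `e₀` keeps the shifted index of `B` inside its box
  rw [sum_eq_single_of_mem e₀ he₀ fun e he hne => by rw [hB _ (mt (hcarry e he).1 hne)]; simp]
  have hx : (fun k => t k * p k + j k) - δ = fun k =>
      t k * (p - fun k => δ k / t k + e₀ k) k + (j - fun k => δ k % t k - t k * e₀ k) k :=
    funext fun k => by
      simp only [Pi.sub_apply]
      linear_combination Int.mul_ediv_add_emod (δ k) (t k)
  rw [hx, kron_apply_mul_add _ _ _ hj, kron_apply_mul_add _ _ _ ((hcarry e₀ he₀).2 rfl),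
    map_mul]
  ring

theorem autocorr_kron {s t : Fin r → ℕ} {A B : Arr r} (hA : SupportedOn s A)
    (hB : SupportedOn t B) (δ : Fin r → ℤ) :
    autocorr (kron t A B) δ = ∑ e ∈ boxFinset (fun _ => 2),
      autocorr A (fun k => δ k / t k + e k) * autocorr B (fun k => δ k % t k - t k * e k) := by
  by_cases ht : ∀ k, 0 < t k
  swap
  · obtain ⟨k, hk⟩ := not_forall.1 ht
    simp [hB.eq_zero_of_size_eq_zero (Nat.eq_zero_of_not_pos hk), autocorr, kron]
  rw [(hA.kron hB).autocorr_eq_sum, sum_boxFinset_mul ht]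
  simp_rw [hA.autocorr_eq_sum, hB.autocorr_eq_sum, sum_mul_sum]
  calc _ = ∑ p ∈ boxFinset s, ∑ j ∈ boxFinset t, ∑ e ∈ boxFinset (fun _ => 2), _ :=
        sum_congr rfl fun p _ => sum_congr rfl fun j hj =>
          kron_mul_conj_kron_sub A hB p (mem_boxFinset.1 hj) δ
    _ = _ := (sum_congr rfl fun _ _ => sum_comm).trans sum_comm

/-- from polyphase GCA sets {A₁,…,A_m} of size s and {B₁,…,B_n} of size t,
the m·n Kronecker products C_{ij} = A_i ⊗ B_j form a polyphase GCA set of size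
s₁t₁×⋯×s_r t_r. -/
theorem stmt12 {r m n : ℕ} (s t : Fin r → ℕ)
    (A : Fin m → Arr r) (B : Fin n → Arr r)
    (hA : ∀ i, IsPolyphase s (A i)) (hB : ∀ j, IsPolyphase t (B j))
    (hAcomp : ∀ δ : Fin r → ℤ, ∑ i, autocorr (A i) δ =
      if δ = 0 then ((∑ i, weight (A i) : ℝ) : ℂ) else 0)
    (hBcomp : ∀ δ : Fin r → ℤ, ∑ j, autocorr (B j) δ =
      if δ = 0 then ((∑ j, weight (B j) : ℝ) : ℂ) else 0)
    (C : Fin m → Fin n → Arr r)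
    (hC : ∀ i j, C i j = kron t (A i) (B j)) :
    (∀ i j, IsPolyphase (fun k => s k * t k) (C i j)) ∧
      ∀ δ : Fin r → ℤ, ∑ i, ∑ j, autocorr (C i j) δ =
        if δ = 0 then ((∑ i, ∑ j, weight (C i j) : ℝ) : ℂ) else 0 := by
  have hCpoly i j : IsPolyphase (fun k => s k * t k) (C i j) := hC i j ▸ (hA i).kron (hB j)
  refine ⟨hCpoly, fun δ => ?_⟩
  split_ifs with hδ
  · subst hδ
    simp only [fun i j => (hCpoly i j).1.autocorr_zero]
    push_cast
    rfl
  calc ∑ i, ∑ j, autocorr (C i j) δ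
      = ∑ e ∈ boxFinset (fun _ => 2), (∑ i, autocorr (A i) fun k => δ k / t k + e k) *
          ∑ j, autocorr (B j) fun k => δ k % t k - t k * e k := by
        simp_rw [hC, autocorr_kron (hA _).1 (hB _).1, sum_mul_sum]
        exact (sum_congr rfl fun _ _ => sum_comm).trans sum_comm
    _ = 0 := sum_eq_zero fun e _ => by
        rw [hAcomp, hBcomp]
        split_ifs with hu hv
        · refine absurd (funext fun k => ?_) hδ
          have huk := congrFun hu k
          have hvk := congrFun hv k
          simp only [Pi.zero_apply] at huk hvk ⊢
          linear_combination (t k : ℤ) * huk + hvk - Int.mul_ediv_add_emod (δ k) (t k)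
        all_goals simp
end

section
/- Let {A, B, C, D} be complex arrays of size m_1×⋯×m_r satisfying R_A + R_B + R_C + R_D = W_1·Δ, where W_1 = w(A)+w(B)+w(C)+w(D), and let {E, F, G, H} be complex arrays of size n_1×⋯×n_r satisfying R_E + R_F + R_G + R_H = W_2·Δ, where W_2 = w(E)+w(F)+w(G)+w(H). Define arrays of size m_1n_1×⋯×m_rn_r by P = A⊗F* − B*⊗E + C⊗G + D⊗H, Q = A*⊗E + B⊗F* − C⊗H* + D⊗G*, R = C*⊗E − D⊗F + A⊗H* + B⊗G, and S = −C⊗F − D*⊗E + A⊗G* − B⊗H. Then R_P + R_Q + R_R + R_S = W_1·W_2·Δ. -/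
open scoped BigOperators

/-!
Finitely supported arrays are elements of the group algebra `ℂ[ℤ^r]`. There the correlation
`Σ X[i] conj Y[i - δ]` is the coefficient at `δ` of `X * Y~`, where `Y~ = conjNeg Y` is
`g ↦ conj Y(-g)`; the flip `A*` is a monomial times `A~`, and `A ⊗ B` (for `B` supported in
the box of size `n`) is `A(zⁿ) * B`, where `A ↦ A(zⁿ) = dilate n A` is a ring homomorphism
commuting with `~`. The theorem thus becomes an identity in a commutative ring with
involution, in which the monomials `u` enter only through `u * u~ = 1`, while the hypotheses
say `A A~ + B B~ + C C~ + D D~ = W₁` and likewise for `E, F, G, H`.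
-/

open AddMonoidAlgebra

section
variable {G : Type*} [AddCommGroup G]

noncomputable def conjNeg : ℂ[G] →+* ℂ[G] :=
  (mapRingHom G (starRingEnd ℂ)).comp (mapDomainRingHom ℂ (negAddMonoidHom : G →+ G))

@[simp]
lemma coeff_conjNeg (x : ℂ[G]) (g : G) :
    (conjNeg x).coeff g = starRingEnd ℂ (x.coeff (-g)) := by
  have := Finsupp.mapDomain_apply neg_injective x.coeff (-g)
  simp_all [conjNeg]

@[simp]
lemma conjNeg_conjNeg (x : ℂ[G]) : conjNeg (conjNeg x) = x := by
  ext g; simp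

lemma conjNeg_single (g : G) (c : ℂ) :
    conjNeg (single g c) = single (-g) (starRingEnd ℂ c) := by
  simp [conjNeg]

lemma conjNeg_mapDomainRingHom (f : G →+ G) (x : ℂ[G]) :
    conjNeg (mapDomainRingHom ℂ f x) = mapDomainRingHom ℂ f (conjNeg x) := by
  induction x using induction_linear with
  | zero => simp
  | add x y hx hy => simp only [map_add, hx, hy]
  | single g c => simp [conjNeg_single, mapDomain_single]

lemma single_mul_conjNeg_single (g : G) : single g (1 : ℂ) * conjNeg (single g 1) = 1 := by
  simp [conjNeg_single, single_mul_single, one_def]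

lemma coeff_mul_conjNeg (x y : ℂ[G]) (δ : G) :
    (x * conjNeg y).coeff δ = ∑ᶠ i, x.coeff i * starRingEnd ℂ (y.coeff (i - δ)) := by
  rw [coeff_mul_apply_left, Finsupp.sum,
    finsum_eq_sum_of_support_subset (s := x.coeff.support)]
  · simp [sub_eq_neg_add]
  · intro i hi
    simp_all

end

theorem quad_product_identity {R : Type*} [CommRing R] (ι : R →+* R) (hι : ∀ x, ι (ι x) = x)
    {u v : R} (hu : u * ι u = 1) (hv : v * ι v = 1) {a b c d e f g h p q r s : R}
    (hp : p = a * (u * ι f) - v * ι b * e + c * g + d * h)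
    (hq : q = v * ι a * e + b * (u * ι f) - c * (u * ι h) + d * (u * ι g))
    (hr : r = v * ι c * e - d * f + a * (u * ι h) + b * g)
    (hs : s = -(c * f) - v * ι d * e + a * (u * ι g) - b * h) :
    p * ι p + q * ι q + r * ι r + s * ι s =
      (a * ι a + b * ι b + c * ι c + d * ι d) *
        (e * ι e + f * ι f + g * ι g + h * ι h) := by
  subst hp hq hr hs
  simp only [map_add, map_sub, map_neg, map_mul, hι]
  linear_combination
    (a * ι a * f * ι f + a * ι a * g * ι g + a * ι a * h * ι h + b * ι b * f * ι f
      - b * ι c * ι f * h + b * ι d * ι f * g - ι b * c * f * ι h + ι b * d * f * ι g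
      + c * ι c * h * ι h - c * ι d * g * ι h - ι c * d * ι g * h + d * ι d * g * ι g) * hu
    + (a * ι a + b * ι b + c * ι c + d * ι d) * (e * ι e) * hv

section
variable {r : ℕ}

lemma SupportedOn.exists_coeff_eq {s : Fin r → ℕ} {X : Arr r} (hX : SupportedOn s X) :
    ∃ x : ℂ[Fin r → ℤ], ⇑x.coeff = X := by
  have hfin : (Function.support X).Finite := by
    refine (Fintype.piFinset fun k => Finset.Ico (0 : ℤ) (s k)).finite_toSet.subset
      fun i hi => ?_
    by_contra hbox
    exact hi (hX i fun h => hbox (by simpa [InBox] using h))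
  exact ⟨ofCoeff (Finsupp.ofSupportFinite X hfin), Finsupp.ofSupportFinite_coe⟩

lemma autocorr_coeff (x : ℂ[Fin r → ℤ]) (δ : Fin r → ℤ) :
    autocorr ⇑x.coeff δ = (x * conjNeg x).coeff δ :=
  (coeff_mul_conjNeg x x δ).symm

lemma flipConj_coeff (s : Fin r → ℕ) (x : ℂ[Fin r → ℤ]) :
    flipConj s ⇑x.coeff = ⇑(single (fun k => (s k : ℤ) - 1) (1 : ℂ) * conjNeg x).coeff := by
  ext i
  simp only [flipConj, coeff_single_mul_apply, coeff_conjNeg, one_mul]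
  congr 2
  funext k
  simp only [Pi.add_apply, Pi.neg_apply]
  ring

lemma SupportedOn.flipConj {s : Fin r → ℕ} {X : Arr r} (hX : SupportedOn s X) :
    SupportedOn s (flipConj s X) := by
  intro i hi
  refine (map_eq_zero _).2 (hX _ fun h => hi fun k => ?_)
  have := h k
  simp only at this
  omega

noncomputable def dilate (n : Fin r → ℕ) : ℂ[Fin r → ℤ] →+* ℂ[Fin r → ℤ] :=
  mapDomainRingHom ℂ (AddMonoidHom.mulLeft fun k => (n k : ℤ))

lemma dilate_single (n : Fin r → ℕ) (g : Fin r → ℤ) (c : ℂ) :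
    dilate n (single g c) = single ((fun k => (n k : ℤ)) * g) c := by
  simp [dilate, mapDomain_single]

lemma dilate_conjNeg (n : Fin r → ℕ) (x : ℂ[Fin r → ℤ]) :
    dilate n (conjNeg x) = conjNeg (dilate n x) :=
  (conjNeg_mapDomainRingHom _ x).symm

lemma eq_ediv_of_inBox_neg_mul_add {n : Fin r → ℕ} {i j : Fin r → ℤ}
    (h : InBox n (-((fun k => (n k : ℤ)) * j) + i)) : j = fun k => i k / n k := by
  funext k
  have hk := h k
  simp only [Pi.add_apply, Pi.neg_apply, Pi.mul_apply] at hk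
  exact ((Int.ediv_emod_unique (by omega)).2 ⟨by ring, hk⟩).1.symm

lemma kron_coeff {n : Fin r → ℕ} (x y : ℂ[Fin r → ℤ]) (hy : SupportedOn n ⇑y.coeff) :
    kron n ⇑x.coeff ⇑y.coeff = ⇑(dilate n x * y).coeff := by
  ext i
  rw [coeff_mul_apply_left, dilate, mapDomainRingHom_apply, coeff_mapDomain,
    Finsupp.sum_mapDomain_index (by simp) (by simp [add_mul]),
    Finsupp.sum_eq_single (fun k => i k / n k)]
  · simp only [kron, AddMonoidHom.coe_mulLeft]
    congr 2
    funext k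
    simp only [Pi.add_apply, Pi.neg_apply, Pi.mul_apply, Int.emod_def]
    ring
  · intro j _ hj
    rw [AddMonoidHom.coe_mulLeft, hy _ fun h => hj (eq_ediv_of_inBox_neg_mul_add h), mul_zero]
  · simp

lemma ComplementaryQuad.sum_mul_conjNeg {a b c d : ℂ[Fin r → ℤ]}
    (h : ComplementaryQuad ⇑a.coeff ⇑b.coeff ⇑c.coeff ⇑d.coeff) :
    a * conjNeg a + b * conjNeg b + c * conjNeg c + d * conjNeg d =
      single 0 ((weight ⇑a.coeff + weight ⇑b.coeff + weight ⇑c.coeff +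
        weight ⇑d.coeff : ℝ) : ℂ) := by
  ext δ
  simp only [coeff_add, Finsupp.add_apply, ← autocorr_coeff, h δ, coeff_single,
    Finsupp.single_apply, eq_comm]

end

/-- if R_A+R_B+R_C+R_D = W₁·Δ (arrays of size m) and
R_E+R_F+R_G+R_H = W₂·Δ (arrays of size n), then for
P = A⊗F* − B*⊗E + C⊗G + D⊗H, Q = A*⊗E + B⊗F* − C⊗H* + D⊗G*,
Rr = C*⊗E − D⊗F + A⊗H* + B⊗G, S = −C⊗F − D*⊗E + A⊗G* − B⊗H,
one has R_P + R_Q + R_Rr + R_S = W₁·W₂·Δ. -/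
theorem stmt15 {r : ℕ} (m n : Fin r → ℕ) (A B C D E F G H : Arr r)
    (hA : SupportedOn m A) (hB : SupportedOn m B)
    (hC : SupportedOn m C) (hD : SupportedOn m D)
    (hE : SupportedOn n E) (hF : SupportedOn n F)
    (hG : SupportedOn n G) (hH : SupportedOn n H)
    (h1 : ComplementaryQuad A B C D)
    (h2 : ComplementaryQuad E F G H)
    (P Q Rr S : Arr r)
    (hP : P = fun v => kron n A (flipConj n F) v - kron n (flipConj m B) E v +
      kron n C G v + kron n D H v)
    (hQ : Q = fun v => kron n (flipConj m A) E v + kron n B (flipConj n F) v -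
      kron n C (flipConj n H) v + kron n D (flipConj n G) v)
    (hR : Rr = fun v => kron n (flipConj m C) E v - kron n D F v +
      kron n A (flipConj n H) v + kron n B G v)
    (hS : S = fun v => -kron n C F v - kron n (flipConj m D) E v +
      kron n A (flipConj n G) v - kron n B H v) :
    ∀ δ : Fin r → ℤ,
      autocorr P δ + autocorr Q δ + autocorr Rr δ + autocorr S δ =
        if δ = 0 then
          (((weight A + weight B + weight C + weight D) *
            (weight E + weight F + weight G + weight H) : ℝ) : ℂ)
        else 0 := by
  obtain ⟨a, rfl⟩ := hA.exists_coeff_eq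
  obtain ⟨b, rfl⟩ := hB.exists_coeff_eq
  obtain ⟨c, rfl⟩ := hC.exists_coeff_eq
  obtain ⟨d, rfl⟩ := hD.exists_coeff_eq
  obtain ⟨e, rfl⟩ := hE.exists_coeff_eq
  obtain ⟨f, rfl⟩ := hF.exists_coeff_eq
  obtain ⟨g, rfl⟩ := hG.exists_coeff_eq
  obtain ⟨h, rfl⟩ := hH.exists_coeff_eq
  have hF' := flipConj_coeff n f ▸ hF.flipConj
  have hG' := flipConj_coeff n g ▸ hG.flipConj
  have hH' := flipConj_coeff n h ▸ hH.flipConj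
  simp only [flipConj_coeff] at hP hQ hR hS
  simp only [kron_coeff _ _ hE, kron_coeff _ _ hF, kron_coeff _ _ hG, kron_coeff _ _ hH,
    kron_coeff _ _ hF', kron_coeff _ _ hG', kron_coeff _ _ hH', ← Finsupp.add_apply,
    ← Finsupp.sub_apply, ← Finsupp.neg_apply, ← coeff_add, ← coeff_sub, ← coeff_neg,
    map_mul, dilate_conjNeg] at hP hQ hR hS
  subst hP hQ hR hS
  intro δ
  have hu := single_mul_conjNeg_single (fun k => (n k : ℤ) - 1)
  have hv : dilate n (single (fun k => (m k : ℤ) - 1) 1) *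
      conjNeg (dilate n (single (fun k => (m k : ℤ) - 1) 1)) = 1 := by
    rw [← dilate_conjNeg, ← map_mul, single_mul_conjNeg_single, map_one]
  have hW1 := congrArg (dilate n) h1.sum_mul_conjNeg
  simp only [map_add, map_mul, dilate_conjNeg, dilate_single, mul_zero] at hW1
  simp only [autocorr_coeff, ← Finsupp.add_apply, ← coeff_add]
  rw [quad_product_identity (R := ℂ[Fin r → ℤ]) conjNeg conjNeg_conjNeg hu hv
    (a := dilate n a) (b := dilate n b) (c := dilate n c) (d := dilate n d)
    (e := e) (f := f) (g := g) (h := h)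
    (hp := rfl) (hq := rfl) (hr := rfl) (hs := rfl), hW1,
    h2.sum_mul_conjNeg, single_mul_single, add_zero, coeff_single, Finsupp.single_apply]
  simp [eq_comm]
end
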